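/- Let X be a nonempty finite set, D a probability distribution on X, F a family of functions from X to [-1,1], δ > 0, and g : X → [0,1]. Then there exist a natural number k < 2/δ^2 and functions f_1, ..., f_k, each of which is either a member of F or the pointwise negation of a member of F, such that the function h : X → [0,1] defined by h(x) = min(1, max(0, (δ/2)·(f_1(x) + ... + f_k(x)))) is an (F, δ)-regular simulator for g under D, i.e., |E_{x∼D}[f(x)·(g(x) − h(x))]| ≤ δ for every f ∈ F. -/
import Mathlib


lemma cl_cases (t : ℝ) :
    (min 1 (max 0 t) = 0 ∧ t ≤ 0) ∨ (min 1 (max 0 t) = t ∧ 0 ≤ t ∧ t ≤ 1) ∨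
      (min 1 (max 0 t) = 1 ∧ 1 ≤ t) := by
  rcases le_or_gt t 0 with h | h
  · left
    constructor
    · rw [max_eq_left h]; norm_num
    · exact h
  rcases le_or_gt t 1 with h1 | h1
  · right; left
    exact ⟨by rw [max_eq_right h.le, min_eq_right h1], h.le, h1⟩
  · right; right
    exact ⟨by rw [max_eq_right h.le, min_eq_left h1.le], h1.le⟩

lemma claimA (s a γ : ℝ) (ha : |a| ≤ γ) :
    (s - min 1 (max 0 s) + a)^2 ≤ (s + a - min 1 (max 0 (s + a)))^2 + γ^2 := by
  obtain ⟨ha1, ha2⟩ := abs_le.mp ha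
  rcases cl_cases s with ⟨h1,h2⟩|⟨h1,h2,h3⟩|⟨h1,h2⟩ <;>
    rcases cl_cases (s+a) with ⟨g1,g2⟩|⟨g1,g2,g3⟩|⟨g1,g2⟩ <;>
    rw [h1, g1] <;>
    nlinarith [sq_nonneg (s + a - 1), sq_nonneg (s + a), sq_nonneg a]

lemma claimB (g s : ℝ) (h0 : 0 ≤ g) (h1 : g ≤ 1) :
    0 ≤ (g - s)^2 - (s - min 1 (max 0 s))^2 := by
  rcases cl_cases s with ⟨c1,c2⟩|⟨c1,c2,c3⟩|⟨c1,c2⟩ <;> rw [c1] <;> nlinarith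

lemma keypt (g s a γ : ℝ) (h0 : 0 ≤ g) (h1 : g ≤ 1) (ha : |a| ≤ γ) :
    (g - (s + a))^2 - (s + a - min 1 (max 0 (s + a)))^2 ≤
      (g - s)^2 - (s - min 1 (max 0 s))^2 - 2*a*(g - min 1 (max 0 s)) + γ^2 := by
  nlinarith [claimA s a γ ha]


lemma decr {X : Type*} [Fintype X] (D : X → ℝ) (hD0 : ∀ x, 0 ≤ D x) (hD1 : ∑ x, D x = 1)
    (g s ψ : X → ℝ) (hg : ∀ x, g x ∈ Set.Icc (0:ℝ) 1) (hψ : ∀ x, |ψ x| ≤ 1)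
    (γ : ℝ) (hγ : 0 ≤ γ) :
    ∑ x, D x * ((g x - (s x + γ * ψ x))^2
        - (s x + γ * ψ x - min 1 (max 0 (s x + γ * ψ x)))^2)
      ≤ (∑ x, D x * ((g x - s x)^2 - (s x - min 1 (max 0 (s x)))^2))
        - 2*γ * (∑ x, D x * (ψ x * (g x - min 1 (max 0 (s x))))) + γ^2 := by
  have habs : ∀ x, |γ * ψ x| ≤ γ := by
    intro x
    rw [abs_mul, abs_of_nonneg hγ]
    calc γ * |ψ x| ≤ γ * 1 := by exact mul_le_mul_of_nonneg_left (hψ x) hγ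
    _ = γ := mul_one γ
  calc ∑ x, D x * ((g x - (s x + γ * ψ x))^2
        - (s x + γ * ψ x - min 1 (max 0 (s x + γ * ψ x)))^2)
      ≤ ∑ x, D x * ((g x - s x)^2 - (s x - min 1 (max 0 (s x)))^2
          - 2*(γ * ψ x)*(g x - min 1 (max 0 (s x))) + γ^2) := by
        refine Finset.sum_le_sum fun x _ => mul_le_mul_of_nonneg_left ?_ (hD0 x)
        exact keypt (g x) (s x) (γ * ψ x) γ (hg x).1 (hg x).2 (habs x)
    _ = ∑ x, (D x * ((g x - s x)^2 - (s x - min 1 (max 0 (s x)))^2)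
          - 2*γ * (D x * (ψ x * (g x - min 1 (max 0 (s x))))) + γ^2 * D x) := by
        exact Finset.sum_congr rfl fun x _ => by ring
    _ = (∑ x, D x * ((g x - s x)^2 - (s x - min 1 (max 0 (s x)))^2))
        - 2*γ * (∑ x, D x * (ψ x * (g x - min 1 (max 0 (s x))))) + γ^2 := by
        rw [Finset.sum_add_distrib, Finset.sum_sub_distrib, ← Finset.mul_sum,
          ← Finset.mul_sum, hD1, mul_one]


lemma regIter {X : Type*} [Fintype X] (D : X → ℝ) (hD0 : ∀ x, 0 ≤ D x) (hD1 : ∑ x, D x = 1)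
    (F : Set (X → ℝ)) (hF : ∀ f ∈ F, ∀ x, f x ∈ Set.Icc (-1 : ℝ) 1)
    (δ : ℝ) (hδ : 0 < δ)
    (g : X → ℝ) (hg : ∀ x, g x ∈ Set.Icc (0 : ℝ) 1) :
    ∀ (n k : ℕ) (f : Fin k → X → ℝ),
      (∀ j, f j ∈ F ∨ (fun x => -(f j x)) ∈ F) →
      (∑ x, D x * ((g x - (δ/2) * ∑ j, f j x)^2
          - ((δ/2) * ∑ j, f j x - min 1 (max 0 ((δ/2) * ∑ j, f j x)))^2))
        ≤ 1 - k * (3/4*δ^2) →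
      1 - k * (3/4*δ^2) ≤ n * (3/4*δ^2) →
      ∃ (k : ℕ) (f : Fin k → X → ℝ),
        (k : ℝ) < 2 / δ ^ 2 ∧
        (∀ j, f j ∈ F ∨ (fun x => -(f j x)) ∈ F) ∧
        ∀ φ ∈ F,
          |∑ x, D x * (φ x * (g x - min 1 (max 0 ((δ / 2) * ∑ j, f j x))))| ≤ δ := by
  -- nonnegativity of the energy
  have Φnn : ∀ s : X → ℝ,
      0 ≤ ∑ x, D x * ((g x - s x)^2 - (s x - min 1 (max 0 (s x)))^2) := by
    intro s
    refine Finset.sum_nonneg fun x _ => mul_nonneg (hD0 x) ?_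
    exact claimB (g x) (s x) (hg x).1 (hg x).2
  -- extension step
  have step : ∀ (k : ℕ) (f : Fin k → X → ℝ),
      ¬ (∀ φ ∈ F, |∑ x, D x * (φ x * (g x - min 1 (max 0 ((δ / 2) * ∑ j, f j x))))| ≤ δ) →
      ∃ ψ : X → ℝ, (ψ ∈ F ∨ (fun x => -(ψ x)) ∈ F) ∧
        (∑ x, D x * ((g x - ((δ/2) * ∑ j, f j x + (δ/2) * ψ x))^2
            - ((δ/2) * ∑ j, f j x + (δ/2) * ψ x
              - min 1 (max 0 ((δ/2) * ∑ j, f j x + (δ/2) * ψ x)))^2))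
          ≤ (∑ x, D x * ((g x - (δ/2) * ∑ j, f j x)^2
              - ((δ/2) * ∑ j, f j x - min 1 (max 0 ((δ/2) * ∑ j, f j x)))^2))
            - 3/4*δ^2 := by
    intro k f hnot
    push_neg at hnot
    obtain ⟨φ, hφF, hφ⟩ := hnot
    have hφb : ∀ x, |φ x| ≤ 1 := fun x => abs_le.mpr ⟨(hF φ hφF x).1, (hF φ hφF x).2⟩
    -- choose sign
    have : ∃ ψ : X → ℝ, (ψ ∈ F ∨ (fun x => -(ψ x)) ∈ F) ∧ (∀ x, |ψ x| ≤ 1) ∧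
        δ ≤ ∑ x, D x * (ψ x * (g x - min 1 (max 0 ((δ/2) * ∑ j, f j x)))) := by
      rcases lt_abs.mp hφ with h | h
      · exact ⟨φ, Or.inl hφF, hφb, h.le⟩
      · refine ⟨fun x => -(φ x), Or.inr (by simpa using hφF), fun x => by simpa using hφb x, ?_⟩
        have : ∑ x, D x * ((-(φ x)) * (g x - min 1 (max 0 ((δ/2) * ∑ j, f j x))))
            = -∑ x, D x * (φ x * (g x - min 1 (max 0 ((δ/2) * ∑ j, f j x)))) := by
          rw [← Finset.sum_neg_distrib]
          exact Finset.sum_congr rfl fun x _ => by ring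
        rw [this]
        linarith
    obtain ⟨ψ, hψmem, hψb, hψδ⟩ := this
    refine ⟨ψ, hψmem, ?_⟩
    have hd := decr D hD0 hD1 g (fun x => (δ/2) * ∑ j, f j x) ψ hg hψb (δ/2) (by linarith)
    have h2 : (∑ x, D x * ((g x - (δ/2) * ∑ j, f j x)^2
          - ((δ/2) * ∑ j, f j x - min 1 (max 0 ((δ/2) * ∑ j, f j x)))^2))
        - 2*(δ/2) * (∑ x, D x * (ψ x * (g x - min 1 (max 0 ((δ/2) * ∑ j, f j x))))) + (δ/2)^2
        ≤ (∑ x, D x * ((g x - (δ/2) * ∑ j, f j x)^2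
            - ((δ/2) * ∑ j, f j x - min 1 (max 0 ((δ/2) * ∑ j, f j x)))^2)) - 3/4*δ^2 := by
      nlinarith [hψδ]
    exact le_trans hd h2
  intro n
  induction n with
  | zero =>
    intro k f hmem hΦ hn
    by_cases hdone : ∀ φ ∈ F, |∑ x, D x * (φ x * (g x - min 1 (max 0 ((δ / 2) * ∑ j, f j x))))| ≤ δ
    · refine ⟨k, f, ?_, hmem, hdone⟩
      have h0 := Φnn (fun x => (δ/2) * ∑ j, f j x)
      rw [lt_div_iff₀ (by positivity)]
      push_cast at hn ⊢
      nlinarith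
    · obtain ⟨ψ, _, hdec⟩ := step k f hdone
      have h0 := Φnn (fun x => (δ/2) * ∑ j, f j x + (δ/2) * ψ x)
      push_cast at hn
      nlinarith
  | succ n ih =>
    intro k f hmem hΦ hn
    by_cases hdone : ∀ φ ∈ F, |∑ x, D x * (φ x * (g x - min 1 (max 0 ((δ / 2) * ∑ j, f j x))))| ≤ δ
    · refine ⟨k, f, ?_, hmem, hdone⟩
      have h0 := Φnn (fun x => (δ/2) * ∑ j, f j x)
      rw [lt_div_iff₀ (by positivity)]
      nlinarith
    · obtain ⟨ψ, hψmem, hdec⟩ := step k f hdone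
      have hsum : ∀ x, (δ/2) * ∑ j : Fin (k+1), (Fin.cons ψ f : Fin (k+1) → X → ℝ) j x
          = (δ/2) * ∑ j, f j x + (δ/2) * ψ x := by
        intro x
        rw [Fin.sum_univ_succ]
        simp [Fin.cons_zero, Fin.cons_succ]
        ring
      have hmem' : ∀ j : Fin (k+1), (Fin.cons ψ f : Fin (k+1) → X → ℝ) j ∈ F ∨ (fun x => -((Fin.cons ψ f : Fin (k+1) → X → ℝ) j x)) ∈ F := by
        intro j
        refine Fin.cases ?_ ?_ j
        · simpa [Fin.cons_zero] using hψmem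
        · intro i; simpa [Fin.cons_succ] using hmem i
      refine ih (k+1) (Fin.cons ψ f) hmem' ?_ ?_
      · have heq : (∑ x, D x * ((g x - (δ/2) * ∑ j : Fin (k+1), (Fin.cons ψ f : Fin (k+1) → X → ℝ) j x)^2
            - ((δ/2) * ∑ j : Fin (k+1), (Fin.cons ψ f : Fin (k+1) → X → ℝ) j x
              - min 1 (max 0 ((δ/2) * ∑ j : Fin (k+1), (Fin.cons ψ f : Fin (k+1) → X → ℝ) j x)))^2))
            = ∑ x, D x * ((g x - ((δ/2) * ∑ j, f j x + (δ/2) * ψ x))^2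
              - ((δ/2) * ∑ j, f j x + (δ/2) * ψ x
                - min 1 (max 0 ((δ/2) * ∑ j, f j x + (δ/2) * ψ x)))^2) := by
          exact Finset.sum_congr rfl fun x _ => by rw [hsum x]
        rw [heq]
        push_cast
        nlinarith
      · push_cast at hn ⊢
        nlinarith

/-- **Complexity-theoretic regularity lemma.** For any distribution `D` on a finite
nonempty set `X`, any family `F` of `[-1,1]`-valued distinguishers, any `δ > 0`, and any
`g : X → [0,1]`, there exist `k < 2/δ²` and functions `f 1, …, f k`, each a member of `F`
or the pointwise negation of a member of `F`, such that the clamped structured sum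
`h x = min 1 (max 0 ((δ/2) * ∑ j, f j x))` is an `(F, δ)`-regular simulator for `g`
under `D`, i.e. `|E_{x∼D}[φ x * (g x - h x)]| ≤ δ` for every `φ ∈ F`. -/

theorem stmt_2 {X : Type*} [Fintype X] [Nonempty X]
    (D : X → ℝ) (hD0 : ∀ x, 0 ≤ D x) (hD1 : ∑ x, D x = 1)
    (F : Set (X → ℝ)) (hF : ∀ f ∈ F, ∀ x, f x ∈ Set.Icc (-1 : ℝ) 1)
    (δ : ℝ) (hδ : 0 < δ)
    (g : X → ℝ) (hg : ∀ x, g x ∈ Set.Icc (0 : ℝ) 1) :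
    ∃ (k : ℕ) (f : Fin k → X → ℝ),
      (k : ℝ) < 2 / δ ^ 2 ∧
      (∀ j, f j ∈ F ∨ (fun x => -(f j x)) ∈ F) ∧
      ∀ φ ∈ F,
        |∑ x, D x * (φ x * (g x - min 1 (max 0 ((δ / 2) * ∑ j, f j x))))| ≤ δ := by
  have hc : (0:ℝ) < 3/4*δ^2 := by positivity
  refine regIter D hD0 hD1 F hF δ hδ g hg (⌈(1:ℝ)/(3/4*δ^2)⌉₊) 0 (Fin.elim0 : Fin 0 → X → ℝ) (fun j => j.elim0) ?_ ?_
  · have : ∀ x : X, (δ/2) * ∑ j : Fin 0, (Fin.elim0 : Fin 0 → X → ℝ) j x = 0 := by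
      intro x; simp
    calc ∑ x, D x * ((g x - (δ/2) * ∑ j : Fin 0, (Fin.elim0 : Fin 0 → X → ℝ) j x)^2
          - ((δ/2) * ∑ j : Fin 0, (Fin.elim0 : Fin 0 → X → ℝ) j x
            - min 1 (max 0 ((δ/2) * ∑ j : Fin 0, (Fin.elim0 : Fin 0 → X → ℝ) j x)))^2)
        = ∑ x, D x * (g x)^2 := by
          refine Finset.sum_congr rfl fun x _ => ?_
          rw [this x]
          norm_num
      _ ≤ ∑ x, D x * 1 := by
          refine Finset.sum_le_sum fun x _ => mul_le_mul_of_nonneg_left ?_ (hD0 x)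
          nlinarith [(hg x).1, (hg x).2]
      _ = 1 := by simp only [mul_one]; exact hD1
      _ ≤ 1 - (0:ℕ) * (3/4*δ^2) := by norm_num
  · have h1 : (1:ℝ)/(3/4*δ^2) ≤ (⌈(1:ℝ)/(3/4*δ^2)⌉₊ : ℝ) := Nat.le_ceil _
    rw [div_le_iff₀ hc] at h1
    push_cast
    linarith
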